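/- arXiv:2508.05911 — 2 statements merged into one kernel-verified Lean document; each statement's English description precedes it below -/
import Mathlib

section
/- Let k ≥ 3 be odd and let n ≡ 2 (mod 4) be sufficiently large. Let G be a graph on n vertices whose vertex set admits a partition into parts L and R with |L| = |R| = n/2 such that every vertex of L is adjacent to every vertex of R, R is an independent set, and the induced subgraph G[L] is a nearly k-regular P_{2k+3}-free graph. Then ρ(G) < (k + √(k² + n² − 4))/2. -/
open SimpleGraph

/-- `F` is contained in `G` as a subgraph (there is an injective map preserving adjacency). -/
def ContainsCopy {α β : Type*} (F : SimpleGraph α) (G : SimpleGraph β) : Prop :=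
  ∃ f : α ↪ β, ∀ a b, F.Adj a b → G.Adj (f a) (f b)

/-- The join of two graphs: disjoint union plus all edges between the two parts. -/
def graphJoin {α β : Type*} (G : SimpleGraph α) (H : SimpleGraph β) :
    SimpleGraph (α ⊕ β) where
  Adj x y :=
    match x, y with
    | Sum.inl a, Sum.inl b => G.Adj a b
    | Sum.inr a, Sum.inr b => H.Adj a b
    | Sum.inl _, Sum.inr _ => True
    | Sum.inr _, Sum.inl _ => True
  symm := by
    constructor
    rintro (a | a) (b | b) h
    · exact G.adj_symm h
    · trivial
    · trivial
    · exact H.adj_symm h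
  loopless := by
    constructor
    rintro (a | a) h
    · exact G.irrefl h
    · exact H.irrefl h

/-- The fan `H_ℓ = K_1 ∨ P_ℓ`. -/
def fan (ℓ : ℕ) : SimpleGraph (Fin 1 ⊕ Fin ℓ) :=
  graphJoin (⊤ : SimpleGraph (Fin 1)) (pathGraph ℓ)

/-- The degree of a vertex. -/
noncomputable def gdeg {V : Type*} (G : SimpleGraph V) (v : V) : ℕ :=
  (G.neighborSet v).ncard

/-- `G` is `k`-regular. -/
def IsKRegular {V : Type*} (G : SimpleGraph V) (k : ℕ) : Prop :=
  ∀ v, gdeg G v = k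

/-- `G` is nearly `k`-regular: all degrees are `k` except one vertex of degree `k-1`. -/
def IsNearlyKRegular {V : Type*} (G : SimpleGraph V) (k : ℕ) : Prop :=
  ∃ u, gdeg G u = k - 1 ∧ ∀ v, v ≠ u → gdeg G v = k

/-- The adjacency matrix of `G` over `ℝ`. -/
noncomputable def adjMat {V : Type*} (G : SimpleGraph V) : Matrix V V ℝ :=
  letI := Classical.decRel G.Adj
  G.adjMatrix ℝ

/-- The spectral radius of a graph: the largest eigenvalue of its adjacency matrix. -/
noncomputable def specRad {V : Type*} [Fintype V] (G : SimpleGraph V) : ℝ :=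
  sSup {μ : ℝ | Module.End.HasEigenvalue (adjMat G).mulVecLin μ}

/-- `SPEX n F`: the `F`-free graphs on `n` vertices of maximum spectral radius. -/
def SPEX (n : ℕ) {α : Type*} (F : SimpleGraph α) : Set (SimpleGraph (Fin n)) :=
  {G | ¬ ContainsCopy F G ∧
    ∀ H : SimpleGraph (Fin n), ¬ ContainsCopy F H → specRad H ≤ specRad G}

/-! Let `ρ` be the spectral radius, `y ≥ 0` an eigenvector for `ρ`, `m = n/2`, `S_L`, `S_R` the
sums of `y` over `L` and `R`, and `w₀` the vertex of degree `k - 1` in `G[L]`. Summing the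
eigenvalue equations over `R` and over `L` gives `ρ S_R = m S_L` and `ρ S_L = k S_L - y w₀ + m S_R`,
hence `(ρ² - kρ - m²) S_L = -ρ y w₀`. The claimed bound is `ρ² < kρ + m² - 1`, so it suffices
that `ρ y w₀ > S_L`. We may assume `ρ ≥ m + k/2`, since `√(k² + n² - 4) ≥ n`. Every `j ∈ L` has
`ρ y j ≥ S_R`, so `ρ² y j ≥ m S_L`; summing over the `k - 1` neighbours of `w₀` gives
`ρ³ y w₀ ≥ m (ρ + k - 1) S_L`, while `ρ² < m (ρ + k - 1)` once `m` is large compared with `k²`. -/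

open Matrix Finset

lemma adjMat_eq_adjMatrix {V : Type*} (G : SimpleGraph V) [DecidableRel G.Adj] :
    adjMat G = G.adjMatrix ℝ := by
  unfold adjMat; congr

lemma adjMat_nonneg {V : Type*} (G : SimpleGraph V) (i j : V) : 0 ≤ adjMat G i j := by
  classical
  rw [adjMat_eq_adjMatrix, adjMatrix_apply]
  positivity

lemma isHermitian_adjMat {V : Type*} (G : SimpleGraph V) : (adjMat G).IsHermitian := by
  classical
  rw [adjMat_eq_adjMatrix, isHermitian_iff_isSymm]
  exact G.isSymm_adjMatrix

lemma Matrix.dotProduct_mulVec_le_abs {n : Type*} [Fintype n] {A : Matrix n n ℝ}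
    (hA : ∀ i j, 0 ≤ A i j) (x : n → ℝ) : x ⬝ᵥ (A *ᵥ x) ≤ |x| ⬝ᵥ (A *ᵥ |x|) := by
  simp only [dotProduct, mulVec, Pi.abs_apply]
  refine sum_le_sum fun i _ => ?_
  calc x i * ∑ j, A i j * x j ≤ |x i * ∑ j, A i j * x j| := le_abs_self _
    _ ≤ |x i| * ∑ j, |A i j * x j| := by
        rw [abs_mul]; gcongr; exact abs_sum_le_sum_abs _ _
    _ = |x i| * ∑ j, A i j * |x j| := by simp_rw [abs_mul, abs_of_nonneg (hA i _)]

section Perron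

variable {V : Type*} [Fintype V] [DecidableEq V] (G : SimpleGraph V)

lemma hasEigenvalue_adjMat_iff {μ : ℝ} :
    Module.End.HasEigenvalue (adjMat G).mulVecLin μ ↔ μ ∈ spectrum ℝ (adjMat G) := by
  rw [Module.End.hasEigenvalue_iff_mem_spectrum, ← Matrix.toLin'_apply', Matrix.spectrum_toLin']

lemma specRad_eq_sSup_spectrum : specRad G = sSup (spectrum ℝ (adjMat G)) := by
  simp only [specRad, hasEigenvalue_adjMat_iff, Set.ofPred_mem_eq]

lemma le_specRad {μ : ℝ} (hμ : μ ∈ spectrum ℝ (adjMat G)) : μ ≤ specRad G := by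
  rw [specRad_eq_sSup_spectrum]
  exact le_csSup (adjMat G).finite_spectrum.bddAbove hμ

lemma specRad_mem_spectrum [Nonempty V] : specRad G ∈ spectrum ℝ (adjMat G) := by
  have hne : (spectrum ℝ (adjMat G)).Nonempty := by
    rw [(isHermitian_adjMat G).spectrum_real_eq_range_eigenvalues]
    exact Set.range_nonempty _
  rw [specRad_eq_sSup_spectrum]
  exact hne.csSup_mem (adjMat G).finite_spectrum

lemma posSemidef_specRad_sub_adjMat : (algebraMap ℝ _ (specRad G) - adjMat G).PosSemidef := by
  rw [posSemidef_iff_isHermitian_and_spectrum_nonneg]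
  refine ⟨(IsSelfAdjoint.algebraMap _ (.all _)).sub (isHermitian_adjMat G), ?_⟩
  rw [← spectrum.singleton_sub_eq]
  rintro _ ⟨_, rfl, μ, hμ, rfl⟩
  exact sub_nonneg.2 (le_specRad G hμ)

lemma exists_nonneg_eigenvector_specRad [Nonempty V] :
    ∃ y : V → ℝ, y ≠ 0 ∧ 0 ≤ y ∧ adjMat G *ᵥ y = specRad G • y := by
  -- The quadratic form of the PSD matrix `ρ - A` vanishes at `x`, hence (`A` being nonnegative)
  -- at `|x|`, and its null vectors lie in its kernel.
  obtain ⟨x, hx⟩ :=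
    ((hasEigenvalue_adjMat_iff G).2 (specRad_mem_spectrum G)).exists_hasEigenvector
  have hAx : adjMat G *ᵥ x = specRad G • x := by simpa using hx.apply_eq_smul
  set M := algebraMap ℝ _ (specRad G) - adjMat G
  have hMx : M *ᵥ x = 0 := by
    simp [M, sub_mulVec, hAx, Algebra.algebraMap_eq_smul_one, smul_mulVec]
  have hMabs : |x| ⬝ᵥ (M *ᵥ |x|) ≤ x ⬝ᵥ (M *ᵥ x) := by
    have habs : |x| ⬝ᵥ |x| = x ⬝ᵥ x := by simp [dotProduct, abs_mul_abs_self]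
    simp only [M, sub_mulVec, dotProduct_sub, Algebra.algebraMap_eq_smul_one, smul_mulVec,
      one_mulVec, dotProduct_smul, habs]
    linarith [dotProduct_mulVec_le_abs (adjMat_nonneg G) x]
  have hM : M *ᵥ |x| = 0 := by
    rw [← (posSemidef_specRad_sub_adjMat G).dotProduct_mulVec_zero_iff, star_trivial]
    exact le_antisymm (by simpa [hMx] using hMabs)
      ((posSemidef_specRad_sub_adjMat G).dotProduct_mulVec_nonneg _)
  refine ⟨|x|, by simpa using hx.2, abs_nonneg x, ?_⟩
  simpa [M, sub_mulVec, Algebra.algebraMap_eq_smul_one, smul_mulVec, sub_eq_zero, eq_comm] using hM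

end Perron

lemma gdeg_induce {V : Type*} (G : SimpleGraph V) [DecidableRel G.Adj] (L : Finset V)
    {w : V} (hw : w ∈ L) :
    gdeg (G.induce (L : Set V)) ⟨w, hw⟩ = #{j ∈ L | G.Adj w j} := by
  have himg : Subtype.val '' (G.induce (L : Set V)).neighborSet ⟨w, hw⟩ =
      ↑({j ∈ L | G.Adj w j}) := by
    ext j
    simp only [Set.mem_image, mem_neighborSet, comap_adj, Function.Embedding.subtype_apply,
      Finset.coe_filter, Set.mem_ofPred_eq, Subtype.exists, Finset.mem_coe]
    aesop
  rw [gdeg, ← Set.ncard_image_of_injective _ Subtype.val_injective, himg, Set.ncard_coe_finset]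

lemma IsNearlyKRegular.exists_card_filter_adj {V : Type*} {G : SimpleGraph V}
    [DecidableRel G.Adj] {L : Finset V} {k : ℕ} (h : IsNearlyKRegular (G.induce (L : Set V)) k)
    (hk : 1 ≤ k) :
    ∃ w₀ ∈ L, #{j ∈ L | G.Adj w₀ j} + 1 = k ∧ ∀ w ∈ L, w ≠ w₀ → #{j ∈ L | G.Adj w j} = k := by
  obtain ⟨⟨w₀, hw₀⟩, h₀, hrest⟩ := h
  refine ⟨w₀, hw₀, by rw [← gdeg_induce G L hw₀, h₀]; omega, fun w hw hne => ?_⟩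
  rw [← gdeg_induce G L hw]
  exact hrest ⟨w, hw⟩ (fun h => hne (congrArg Subtype.val h))

lemma sum_sum_filter_adj_eq_sum_card_mul {V : Type*} (G : SimpleGraph V) [DecidableRel G.Adj]
    (L : Finset V) (y : V → ℝ) :
    ∑ w ∈ L, ∑ j ∈ L with G.Adj w j, y j = ∑ j ∈ L, (#{w ∈ L | G.Adj j w} : ℝ) * y j := by
  simp_rw [sum_filter]
  rw [sum_comm]
  refine sum_congr rfl fun j _ => ?_
  rw [natCast_card_filter, sum_mul]
  simp_rw [G.adj_comm j, ite_mul, one_mul, zero_mul]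

lemma sum_sum_filter_adj_eq_of_degrees {V : Type*} {G : SimpleGraph V} [DecidableRel G.Adj]
    {L : Finset V} {k : ℕ} {w₀ : V} (hw₀ : w₀ ∈ L) (h₀ : #{j ∈ L | G.Adj w₀ j} + 1 = k)
    (hdeg : ∀ w ∈ L, w ≠ w₀ → #{j ∈ L | G.Adj w j} = k) (y : V → ℝ) :
    ∑ w ∈ L, ∑ j ∈ L with G.Adj w j, y j = k * ∑ j ∈ L, y j - y w₀ := by
  have hdefect : ∑ j ∈ L, ((k : ℝ) * y j - #{w ∈ L | G.Adj j w} * y j) = y w₀ := by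
    rw [sum_eq_single_of_mem w₀ hw₀ fun j hj hne => by rw [hdeg j hj hne, sub_self], ← h₀]
    push_cast
    ring
  rw [sum_sub_distrib] at hdefect
  rw [sum_sum_filter_adj_eq_sum_card_mul, mul_sum]
  linarith

section CompleteToIndependentSet

variable {V : Type*} [Fintype V] [DecidableEq V] {G : SimpleGraph V} [DecidableRel G.Adj]
  {L R : Finset V} (hunion : L ∪ R = univ) (hLR : ∀ u ∈ L, ∀ v ∈ R, G.Adj u v)

include hunion hLR

lemma neighborFinset_eq_of_mem_right (hRR : ∀ u ∈ R, ∀ v ∈ R, ¬ G.Adj u v) {v : V}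
    (hv : v ∈ R) : G.neighborFinset v = L := by
  ext j
  rw [mem_neighborFinset]
  refine ⟨fun h => ?_, fun hj => (hLR j hj v hv).symm⟩
  have := mem_univ j
  rw [← hunion, mem_union] at this
  exact this.resolve_right fun hj => hRR v hv j hj h

lemma neighborFinset_eq_of_mem_left {w : V} (hw : w ∈ L) :
    G.neighborFinset w = {j ∈ L | G.Adj w j} ∪ R := by
  ext j
  rw [mem_neighborFinset, mem_union, mem_filter]
  refine ⟨fun h => ?_, ?_⟩
  · have := mem_univ j
    rw [← hunion, mem_union] at this
    exact this.imp (⟨·, h⟩) id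
  · rintro (⟨-, h⟩ | hj)
    · exact h
    · exact hLR w hw j hj

variable {ρ : ℝ} {y : V → ℝ} (hy : adjMat G *ᵥ y = ρ • y)

include hy

lemma mul_apply_eq_sum_of_mem_right (hRR : ∀ u ∈ R, ∀ v ∈ R, ¬ G.Adj u v) {v : V} (hv : v ∈ R) :
    ρ * y v = ∑ j ∈ L, y j := by
  rw [← neighborFinset_eq_of_mem_right hunion hLR hRR hv, ← adjMatrix_mulVec_apply,
    ← adjMat_eq_adjMatrix, hy, Pi.smul_apply, smul_eq_mul]

lemma mul_apply_eq_sum_of_mem_left (hdisj : Disjoint L R) {w : V} (hw : w ∈ L) :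
    ρ * y w = ∑ j ∈ L with G.Adj w j, y j + ∑ j ∈ R, y j := by
  rw [← sum_union (hdisj.mono_left (filter_subset _ _)),
    ← neighborFinset_eq_of_mem_left hunion hLR hw, ← adjMatrix_mulVec_apply, ← adjMat_eq_adjMatrix,
    hy, Pi.smul_apply, smul_eq_mul]

lemma mul_sum_left_eq (hdisj : Disjoint L R) {m k : ℕ} (hL : #L = m) {w₀ : V} (hw₀ : w₀ ∈ L)
    (h₀ : #{j ∈ L | G.Adj w₀ j} + 1 = k) (hdeg : ∀ w ∈ L, w ≠ w₀ → #{j ∈ L | G.Adj w j} = k) :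
    ρ * ∑ j ∈ L, y j = k * ∑ j ∈ L, y j - y w₀ + m * ∑ j ∈ R, y j := by
  rw [mul_sum, sum_congr rfl fun w hw => mul_apply_eq_sum_of_mem_left hunion hLR hy hdisj hw,
    sum_add_distrib, sum_sum_filter_adj_eq_of_degrees hw₀ h₀ hdeg, sum_const, hL, nsmul_eq_mul]

variable (hRR : ∀ u ∈ R, ∀ v ∈ R, ¬ G.Adj u v)

include hRR

lemma mul_sum_right_eq {m : ℕ} (hR : #R = m) : ρ * ∑ j ∈ R, y j = m * ∑ j ∈ L, y j := by
  rw [mul_sum, sum_congr rfl fun v hv => mul_apply_eq_sum_of_mem_right hunion hLR hy hRR hv,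
    sum_const, hR, nsmul_eq_mul]

lemma sum_pos_of_ne_zero (hρ : 0 < ρ) (hy₀ : y ≠ 0) (hynn : 0 ≤ y) : 0 < ∑ j ∈ L, y j := by
  refine (sum_nonneg fun j _ => hynn j).lt_of_ne fun hsum => hy₀ (funext fun j => ?_)
  have hj := mem_univ j
  rw [← hunion, mem_union] at hj
  rcases hj with hj | hj
  · exact (sum_eq_zero_iff_of_nonneg fun i _ => hynn i).1 hsum.symm j hj
  · have := mul_apply_eq_sum_of_mem_right hunion hLR hy hRR hj
    rw [← hsum] at this
    exact (mul_eq_zero.1 this).resolve_left hρ.ne'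

variable (hdisj : Disjoint L R) {m : ℕ} (hR : #R = m) (hρ : 0 ≤ ρ) (hynn : 0 ≤ y)

include hdisj hR hρ hynn

lemma mul_sum_left_le_sq_mul {j : V} (hj : j ∈ L) : m * ∑ j ∈ L, y j ≤ ρ ^ 2 * y j := by
  have hneigh : 0 ≤ ∑ i ∈ L with G.Adj j i, y i := sum_nonneg fun i _ => hynn i
  have := mul_apply_eq_sum_of_mem_left hunion hLR hy hdisj hj
  rw [← mul_sum_right_eq hunion hLR hy hRR hR]
  nlinarith

lemma le_cube_mul_of_card_filter_adj {k : ℕ} {w₀ : V} (hw₀ : w₀ ∈ L)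
    (h₀ : #{j ∈ L | G.Adj w₀ j} + 1 = k) :
    m * (ρ + k - 1) * ∑ j ∈ L, y j ≤ ρ ^ 3 * y w₀ := by
  have hneigh : (k - 1) * (m * ∑ j ∈ L, y j) ≤ ρ ^ 2 * ∑ j ∈ L with G.Adj w₀ j, y j := by
    have hcard : (k : ℝ) - 1 = #{j ∈ L | G.Adj w₀ j} := by rw [← h₀]; push_cast; ring
    calc (k - 1) * (m * ∑ j ∈ L, y j) = ∑ i ∈ L with G.Adj w₀ i, m * ∑ j ∈ L, y j := by
          rw [sum_const, nsmul_eq_mul, hcard]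
      _ ≤ ∑ j ∈ L with G.Adj w₀ j, ρ ^ 2 * y j := sum_le_sum fun j hj =>
          mul_sum_left_le_sq_mul hunion hLR hy hRR hdisj hR hρ hynn (mem_filter.1 hj).1
      _ = ρ ^ 2 * ∑ j ∈ L with G.Adj w₀ j, y j := (mul_sum _ _ _).symm
  have hw₀ := mul_apply_eq_sum_of_mem_left hunion hLR hy hdisj hw₀
  have hright := mul_sum_right_eq hunion hLR hy hRR hR
  linear_combination hneigh - ρ ^ 2 * hw₀ - ρ * hright

end CompleteToIndependentSet

lemma lt_half_add_sqrt_of_sq_lt {ρ k c : ℝ} (h : ρ ^ 2 < k * ρ + c) :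
    ρ < (k + √(k ^ 2 + 4 * c)) / 2 := by
  have hsq : (2 * ρ - k) ^ 2 < k ^ 2 + 4 * c := by nlinarith
  have : 2 * ρ - k < √(k ^ 2 + 4 * c) :=
    calc 2 * ρ - k ≤ |2 * ρ - k| := le_abs_self _
      _ = √((2 * ρ - k) ^ 2) := (Real.sqrt_sq_eq_abs _).symm
      _ < √(k ^ 2 + 4 * c) := Real.sqrt_lt_sqrt (sq_nonneg _) hsq
  linarith

lemma sq_lt_of_spectral_relations {ρ k m SL SR y₀ : ℝ} (hk : 3 ≤ k) (hm : 2 * k ^ 2 + 5 ≤ m)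
    (hρ : m + k / 2 ≤ ρ) (hSL : 0 < SL) (hy₀ : 0 ≤ y₀) (hright : ρ * SR = m * SL)
    (hleft : ρ * SL = k * SL - y₀ + m * SR) (hw₀ : m * (ρ + k - 1) * SL ≤ ρ ^ 3 * y₀) :
    ρ ^ 2 < k * ρ + (m ^ 2 - 1) := by
  have hkm : k ≤ m := by nlinarith
  have hρpos : 0 < ρ := by linarith
  have hquad : ρ ^ 2 * SL = (k * ρ + m ^ 2) * SL - ρ * y₀ := by
    linear_combination ρ * hleft + m * hright
  have hcrude : ρ ^ 2 ≤ k * ρ + m ^ 2 := by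
    refine le_of_mul_le_mul_right ?_ hSL
    nlinarith [mul_nonneg hρpos.le hy₀]
  have hmid : ρ ^ 2 < m * (ρ + k - 1) := by
    nlinarith [mul_nonneg (sub_nonneg.2 hkm) (by linarith : 0 ≤ ρ - (m + k / 2))]
  have hy₀SL : SL < ρ * y₀ := by
    refine lt_of_mul_lt_mul_left ?_ (sq_nonneg ρ)
    calc ρ ^ 2 * SL < m * (ρ + k - 1) * SL := mul_lt_mul_of_pos_right hmid hSL
      _ ≤ ρ ^ 2 * (ρ * y₀) := by linarith
  refine lt_of_mul_lt_mul_right ?_ hSL.le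
  nlinarith

theorem specRad_lt_of_isNearlyKRegular_induce {V : Type*} [Fintype V] [DecidableEq V]
    {G : SimpleGraph V} {L R : Finset V} {k m : ℕ} (hdisj : Disjoint L R)
    (hunion : L ∪ R = univ) (hL : #L = m) (hR : #R = m) (hLR : ∀ u ∈ L, ∀ v ∈ R, G.Adj u v)
    (hRR : ∀ u ∈ R, ∀ v ∈ R, ¬ G.Adj u v) (hnear : IsNearlyKRegular (G.induce (L : Set V)) k)
    (hk : 3 ≤ k) (hm : 2 * k ^ 2 + 5 ≤ m) :
    specRad G < (k + √(k ^ 2 + 4 * ((m : ℝ) ^ 2 - 1))) / 2 := by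
  classical
  obtain ⟨w₀, hw₀, h₀, hdeg⟩ := hnear.exists_card_filter_adj (by omega)
  have hkR : (3 : ℝ) ≤ k := by exact_mod_cast hk
  have hmR : 2 * (k : ℝ) ^ 2 + 5 ≤ m := by exact_mod_cast hm
  rcases lt_or_ge (specRad G) (m + k / 2) with hsmall | hlarge
  · have : 2 * (m : ℝ) ≤ √(k ^ 2 + 4 * (m ^ 2 - 1)) := Real.le_sqrt_of_sq_le (by nlinarith)
    linarith
  have : Nonempty V := ⟨w₀⟩
  obtain ⟨y, hy₀, hynn, hy⟩ := exists_nonneg_eigenvector_specRad G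
  have hρ : 0 < specRad G := by linarith
  exact lt_half_add_sqrt_of_sq_lt <| sq_lt_of_spectral_relations hkR hmR hlarge
    (sum_pos_of_ne_zero hunion hLR hy hRR hρ hy₀ hynn) (hynn w₀)
    (mul_sum_right_eq hunion hLR hy hRR hR) (mul_sum_left_eq hunion hLR hy hdisj hL hw₀ h₀ hdeg)
    (le_cube_mul_of_card_filter_adj hunion hLR hy hRR hdisj hR hρ.le hynn hw₀ h₀)

theorem spectral_upper_bound_nearly_regular_general (k : ℕ) (hk : 3 ≤ k) :
    ∃ n₀ : ℕ, ∀ n : ℕ, n₀ ≤ n → n % 4 = 2 →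
      ∀ G : SimpleGraph (Fin n), ∀ L R : Finset (Fin n),
        Disjoint L R → L ∪ R = Finset.univ →
        L.card = n / 2 → R.card = n / 2 →
        (∀ u ∈ L, ∀ v ∈ R, G.Adj u v) →
        (∀ u ∈ R, ∀ v ∈ R, ¬ G.Adj u v) →
        IsNearlyKRegular (G.induce (L : Set (Fin n))) k →
        ¬ ContainsCopy (pathGraph (2 * k + 3)) (G.induce (L : Set (Fin n))) →
        specRad G < ((k : ℝ) + Real.sqrt ((k : ℝ) ^ 2 + (n : ℝ) ^ 2 - 4)) / 2 := by
  refine ⟨4 * k ^ 2 + 10, fun n hn hn4 G L R hdisj hunion hL hR hLR hRR hnear _ => ?_⟩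
  have hn : (n : ℝ) = 2 * (n / 2 : ℕ) := by exact_mod_cast (by omega : n = 2 * (n / 2))
  convert specRad_lt_of_isNearlyKRegular_induce hdisj hunion hL hR hLR hRR hnear hk (by omega)
    using 4
  rw [hn]
  ring

/-- for odd `k ≥ 3` and sufficiently large `n ≡ 2 (mod 4)`, any graph
obtained from the complete bipartite graph with parts of size `n/2` by embedding a
nearly `k`-regular `P_{2k+3}`-free graph into one part has spectral radius strictly
less than `(k + √(k² + n² - 4))/2`. -/
theorem spectral_upper_bound_nearly_regular (k : ℕ) (hko : Odd k) (hk : 3 ≤ k) :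
    ∃ n₀ : ℕ, ∀ n : ℕ, n₀ ≤ n → n % 4 = 2 →
      ∀ G : SimpleGraph (Fin n), ∀ L R : Finset (Fin n),
        Disjoint L R → L ∪ R = Finset.univ →
        L.card = n / 2 → R.card = n / 2 →
        (∀ u ∈ L, ∀ v ∈ R, G.Adj u v) →
        (∀ u ∈ R, ∀ v ∈ R, ¬ G.Adj u v) →
        IsNearlyKRegular (G.induce (L : Set (Fin n))) k →
        ¬ ContainsCopy (pathGraph (2 * k + 3)) (G.induce (L : Set (Fin n))) →
        specRad G < ((k : ℝ) + Real.sqrt ((k : ℝ) ^ 2 + (n : ℝ) ^ 2 - 4)) / 2 :=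
  spectral_upper_bound_nearly_regular_general k hk
end

section
/- Let k ≥ 2 be an even integer, let n ≥ 6k, and let G ∈ SPEX(n, H_{2k+3}). Then ρ(G) ≥ (k + √(k² + n²))/2 if n is even, and ρ(G) ≥ (k + √(k² + n² − 1))/2 if n is odd. -/
open SimpleGraph

/-!
Split the `n` vertices into parts of sizes `⌊n/2⌋` and `⌈n/2⌉`, join the two parts completely, and
put on the first part a `k`-regular graph whose components are circulant graphs on between `k + 1`
and `2k + 1` vertices (each vertex adjacent to the `k/2` nearest ones on either side of a cycle,
which is where `k` even is needed). This graph contains no `H_{2k+3}`: an apex in the second part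
would need a path on `2k + 3` vertices inside one component of the first part, while an apex in
the first part sees at most `k` path vertices there and at most `k + 2` pairwise non-consecutive
ones in the independent second part. The vector equal to `λ` on the first part and to `⌊n/2⌋` on
the second is an eigenvector for the positive root `λ` of `λ² = kλ + ⌊n/2⌋⌈n/2⌉`, so `ρ(G) ≥ λ`
by extremality, and `4⌊n/2⌋⌈n/2⌉` is `n²` or `n² - 1`.
-/

theorem containsCopy_iff_isContained {α β : Type*} {F : SimpleGraph α} {G : SimpleGraph β} :
    ContainsCopy F G ↔ F ⊑ G :=
  ⟨fun ⟨f, hf⟩ => ⟨⟨⟨f, hf _ _⟩, f.injective⟩⟩,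
    fun ⟨c⟩ => ⟨c.toEmbedding, fun _ _ h => c.toHom.map_adj h⟩⟩

theorem gdeg_eq_degree {V : Type*} [Fintype V] (G : SimpleGraph V) [DecidableRel G.Adj] (v : V) :
    gdeg G v = G.degree v := by
  rw [gdeg, ← card_neighborSet_eq_degree, Set.ncard_eq_toFinset_card', Set.toFinset_card]

namespace SimpleGraph

section Containment

variable {α V W : Type*} {F : SimpleGraph α} {G : SimpleGraph V} {H : SimpleGraph W}

theorem Copy.isContained_of_forall_mem_range (c : Copy F G) (e : H ↪g G)
    (h : ∀ a, c a ∈ Set.range e) : F ⊑ H := by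
  choose g hg using h
  refine ⟨⟨⟨g, fun {a b} hab => e.map_adj_iff.1 ?_⟩, fun a b hab => c.injective ?_⟩⟩
  · rw [hg, hg]
    exact c.toHom.map_adj hab
  · simp only [Copy.coe_toHom, ← hg]
    exact congrArg e hab

theorem not_isContained_of_card_lt [Fintype α] [Fintype V]
    (h : Fintype.card V < Fintype.card α) : ¬ F ⊑ G :=
  fun ⟨c⟩ => h.not_ge (Fintype.card_le_of_injective _ c.injective)

theorem Reachable.isLeft_eq_of_sum {x y : V ⊕ W} (h : (G ⊕g H).Reachable x y) :
    x.isLeft = y.isLeft := by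
  rcases x with v | w <;> rcases y with v' | w'
  · rfl
  · exact absurd h (not_reachable_sum_inl_inr v w')
  · exact absurd h.symm (not_reachable_sum_inl_inr v' w)
  · rfl

theorem Connected.isContained_sum (hF : F.Connected) (h : F ⊑ G ⊕g H) : F ⊑ G ∨ F ⊑ H := by
  obtain ⟨c⟩ := h
  obtain ⟨a₀⟩ := hF.nonempty
  have hside (a : α) : (c a).isLeft = (c a₀).isLeft :=
    ((hF.preconnected a₀ a).map c.toHom).isLeft_eq_of_sum.symm
  cases h₀ : (c a₀).isLeft
  · refine .inr (c.isContained_of_forall_mem_range Embedding.sumInr fun a => ?_)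
    obtain ⟨w, hw⟩ := Sum.isRight_iff.1 (by simpa [h₀] using hside a)
    exact ⟨w, hw.symm⟩
  · refine .inl (c.isContained_of_forall_mem_range Embedding.sumInl fun a => ?_)
    obtain ⟨v, hv⟩ := Sum.isLeft_iff.1 ((hside a).trans h₀)
    exact ⟨v, hv.symm⟩

end Containment

theorem Iso.neighborSet_apply_eq_image {V W : Type*} {G : SimpleGraph V} {G' : SimpleGraph W}
    (e : G ≃g G') (v : V) : G'.neighborSet (e v) = e '' G.neighborSet v := by
  ext w
  refine ⟨fun h => ⟨e.symm w, ?_, e.apply_symm_apply w⟩, ?_⟩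
  · simpa using e.symm.map_adj_iff.2 h
  · rintro ⟨u, hu, rfl⟩
    exact e.map_adj_iff.2 hu

end SimpleGraph

open SimpleGraph

theorem IsKRegular.of_iso {V W : Type*} {G : SimpleGraph V} {G' : SimpleGraph W} {k : ℕ}
    (hG : IsKRegular G k) (e : G ≃g G') : IsKRegular G' k := fun w => by
  rw [← hG (e.symm w), gdeg, gdeg, ← e.apply_symm_apply w, e.neighborSet_apply_eq_image,
    Set.ncard_image_of_injective _ e.injective, e.apply_symm_apply]

theorem IsKRegular.sum {V W : Type*} {G : SimpleGraph V} {H : SimpleGraph W} {k : ℕ}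
    (hG : IsKRegular G k) (hH : IsKRegular H k) : IsKRegular (G ⊕g H) k := by
  rintro (v | w)
  · rw [gdeg, neighborSet_sum_inl, Set.ncard_image_of_injective _ Sum.inl_injective, ← gdeg, hG]
  · rw [gdeg, neighborSet_sum_inr, Set.ncard_image_of_injective _ Sum.inr_injective, ← gdeg, hH]

theorem ZMod.intCast_injOn_Icc {N K : ℕ} (hN : 2 * K < N) :
    Set.InjOn ((↑) : ℤ → ZMod N) (Set.Icc (-K : ℤ) K) := by
  intro i hi j hj hij
  rw [ZMod.intCast_eq_intCast_iff_dvd_sub] at hij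
  have := Int.eq_zero_of_abs_lt_dvd hij (by simp only [Set.mem_Icc] at hi hj; rw [abs_lt]; omega)
  omega

namespace SimpleGraph

variable {N K : ℕ}

theorem circulantGraph_Icc_adj_iff (hN : 2 * K < N) {u v : ZMod N} :
    (circulantGraph (((↑) : ℤ → ZMod N) '' Set.Icc 1 K)).Adj u v ↔
      v ∈ (u + ·) '' (((↑) : ℤ → ZMod N) '' (Set.Icc (-K : ℤ) K \ {0})) := by
  simp only [circulantGraph_adj, Set.mem_image, Set.mem_Icc, Set.mem_sdiff, Set.mem_singleton_iff]
  constructor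
  · rintro ⟨-, ⟨j, hj, hjuv⟩ | ⟨j, hj, hjvu⟩⟩
    · exact ⟨_, ⟨-j, ⟨⟨by omega, by omega⟩, by omega⟩, rfl⟩, by push_cast; rw [hjuv]; abel⟩
    · exact ⟨_, ⟨j, ⟨⟨by omega, by omega⟩, by omega⟩, rfl⟩, by rw [hjvu]; abel⟩
  · rintro ⟨_, ⟨j, ⟨hj, hj0⟩, rfl⟩, rfl⟩
    refine ⟨fun h => hj0 (ZMod.intCast_injOn_Icc hN hj ⟨by omega, by omega⟩ ?_), ?_⟩
    · simpa using h
    · rcases lt_or_gt_of_ne hj0 with hneg | hpos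
      · exact .inl ⟨-j, ⟨by omega, by omega⟩, by push_cast; abel⟩
      · exact .inr ⟨j, ⟨by omega, hj.2⟩, by abel⟩

theorem isKRegular_circulantGraph_Icc (hN : 2 * K < N) :
    IsKRegular (circulantGraph (((↑) : ℤ → ZMod N) '' Set.Icc 1 K)) (2 * K) := fun u => by
  have hnbhd : (circulantGraph (((↑) : ℤ → ZMod N) '' Set.Icc 1 K)).neighborSet u =
      (u + ·) '' (((↑) : ℤ → ZMod N) '' (Set.Icc (-K : ℤ) K \ {0})) :=
    Set.ext fun v => circulantGraph_Icc_adj_iff hN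
  rw [gdeg, hnbhd, Set.ncard_image_of_injective _ (add_right_injective u),
    ((ZMod.intCast_injOn_Icc hN).mono Set.sdiff_subset).ncard_image,
    Set.ncard_sdiff_singleton_of_mem (by simp), Set.ncard_eq_toFinset_card', Set.toFinset_Icc,
    Int.card_Icc]
  omega

end SimpleGraph

theorem exists_isKRegular_not_isContained_pathGraph {k m ℓ : ℕ} (hk : Even k) (hkm : k + 1 ≤ m)
    (hℓ : 2 * k + 1 < ℓ) : ∃ R : SimpleGraph (Fin m), IsKRegular R k ∧ ¬ pathGraph ℓ ⊑ R := by
  obtain ⟨K, rfl⟩ := hk.two_dvd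
  obtain ⟨ℓ, rfl⟩ : ∃ ℓ', ℓ = ℓ' + 1 := ⟨ℓ - 1, by omega⟩
  induction m using Nat.strong_induction_on with
  | _ m ih =>
  by_cases hsmall : m ≤ 2 * (2 * K) + 1
  · have : NeZero m := ⟨by omega⟩
    set C := circulantGraph (((↑) : ℤ → ZMod m) '' Set.Icc 1 K)
    refine ⟨C.overFin (ZMod.card m),
      (isKRegular_circulantGraph_Icc (by omega)).of_iso (C.overFinIso _), ?_⟩
    rw [← isContained_congr_right (C.overFinIso _)]
    exact not_isContained_of_card_lt (by rw [ZMod.card, Fintype.card_fin]; omega)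
  · obtain ⟨R, hR, hRpath⟩ := ih (m - (2 * K + 1)) (by omega) (by omega)
    set C := circulantGraph (((↑) : ℤ → ZMod (2 * K + 1)) '' Set.Icc 1 K)
    have hcard : Fintype.card (Fin (m - (2 * K + 1)) ⊕ ZMod (2 * K + 1)) = m := by
      rw [Fintype.card_sum, Fintype.card_fin, ZMod.card]
      omega
    refine ⟨(R ⊕g C).overFin hcard,
      (hR.sum (isKRegular_circulantGraph_Icc (by omega))).of_iso ((R ⊕g C).overFinIso hcard), ?_⟩
    rw [← isContained_congr_right ((R ⊕g C).overFinIso hcard)]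
    intro h
    rcases (pathGraph_connected _).isContained_sum h with hR' | hC
    · exact hRpath hR'
    · exact not_isContained_of_card_lt (by rw [ZMod.card, Fintype.card_fin]; omega) hC

namespace SimpleGraph

variable {α β : Type*}

def Embedding.graphJoinInl (G : SimpleGraph α) (H : SimpleGraph β) : G ↪g graphJoin G H :=
  ⟨⟨Sum.inl, Sum.inl_injective⟩, Iff.rfl⟩

def Embedding.graphJoinInr (G : SimpleGraph α) (H : SimpleGraph β) : H ↪g graphJoin G H :=
  ⟨⟨Sum.inr, Sum.inr_injective⟩, Iff.rfl⟩

theorem card_le_of_isIndepSet_pathGraph {ℓ : ℕ} {s : Finset (Fin ℓ)}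
    (hs : (pathGraph ℓ).IsIndepSet s) : s.card ≤ (ℓ + 1) / 2 := by
  rw [← Finset.card_range ((ℓ + 1) / 2)]
  refine Finset.card_le_card_of_injOn (fun j => j.val / 2) (fun j _ => ?_) fun i hi j hj hij => ?_
  · simp only [Finset.coe_range, Set.mem_Iio]
    omega
  · by_contra hne
    have : ¬ (pathGraph ℓ).Adj i j := hs hi hj hne
    rw [pathGraph_adj] at this
    simp only at hij
    omega

end SimpleGraph

theorem not_containsCopy_fan_graphJoin_bot {α β : Type*} [Finite α] {R : SimpleGraph α}
    {d ℓ : ℕ} (hdeg : ∀ a, gdeg R a ≤ d) (hdℓ : d + (ℓ + 1) / 2 < ℓ)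
    (hR : ¬ pathGraph ℓ ⊑ R) : ¬ ContainsCopy (fan ℓ) (graphJoin R (⊥ : SimpleGraph β)) := by
  rw [containsCopy_iff_isContained]
  rintro ⟨c⟩
  set p : Copy (pathGraph ℓ) (graphJoin R ⊥) := c.comp (Embedding.graphJoinInr _ _).toCopy
  have hapex (j : Fin ℓ) : (graphJoin R (⊥ : SimpleGraph β)).Adj (c (.inl 0)) (p j) :=
    c.toHom.map_adj trivial
  rcases hc : c (.inl 0) with a | b
  · classical
    have hA : (Finset.univ.filter fun j : Fin ℓ => (p j).isLeft).card ≤ d := by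
      refine le_trans ?_ (hdeg a)
      rw [← Set.ncard_coe_finset, gdeg, ← Set.ncard_image_of_injective (R.neighborSet a)
        Sum.inl_injective]
      refine Set.ncard_le_ncard_of_injOn p (fun j hj => ?_) p.injective.injOn (Set.toFinite _)
      obtain ⟨a', ha'⟩ := Sum.isLeft_iff.1 (Finset.mem_filter.1 hj).2
      have := hapex j
      rw [hc, ha'] at this
      exact ⟨a', this, ha'.symm⟩
    have hB : (Finset.univ.filter fun j : Fin ℓ => ¬ (p j).isLeft).card ≤ (ℓ + 1) / 2 := by
      refine card_le_of_isIndepSet_pathGraph fun i hi j hj _ hij => ?_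
      obtain ⟨b, hb⟩ := Sum.isRight_iff.1 (by simpa using (Finset.mem_filter.1 hi).2)
      obtain ⟨b', hb'⟩ := Sum.isRight_iff.1 (by simpa using (Finset.mem_filter.1 hj).2)
      have := p.toHom.map_adj hij
      rw [Copy.coe_toHom, hb, hb'] at this
      exact this
    have hsplit := Finset.card_filter_add_card_filter_not (s := Finset.univ)
      (fun j : Fin ℓ => (p j).isLeft)
    rw [Finset.card_univ, Fintype.card_fin] at hsplit
    omega
  · refine hR (p.isContained_of_forall_mem_range (Embedding.graphJoinInl _ _) fun j => ?_)
    have := hapex j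
    rw [hc] at this
    rcases hpj : p j with a | b'
    · exact ⟨a, rfl⟩
    · rw [hpj] at this
      exact this.elim

theorem le_specRad_of_hasEigenvalue {V : Type*} [Fintype V] {G : SimpleGraph V} {μ : ℝ}
    (h : Module.End.HasEigenvalue (adjMat G).mulVecLin μ) : μ ≤ specRad G :=
  le_csSup (Module.End.finite_hasEigenvalue _).bddAbove h

theorem SimpleGraph.Iso.hasEigenvalue_adjMat {V W : Type*} [Fintype V] [Fintype W]
    {G : SimpleGraph V} {G' : SimpleGraph W} (e : G ≃g G') {μ : ℝ}
    (h : Module.End.HasEigenvalue (adjMat G).mulVecLin μ) :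
    Module.End.HasEigenvalue (adjMat G').mulVecLin μ := by
  classical
  have hA : adjMat G' = (adjMat G).submatrix e.symm.toEquiv e.symm.toEquiv := by
    ext v w
    rw [Matrix.submatrix_apply, adjMat, adjMat, adjMatrix_apply, adjMatrix_apply]
    exact if_congr e.symm.map_adj_iff.symm rfl rfl
  obtain ⟨x, hx⟩ := h.exists_hasEigenvector
  refine Module.End.hasEigenvalue_of_hasEigenvector (x := x ∘ e.symm) ⟨?_, fun h0 => hx.2 ?_⟩
  · rw [Module.End.mem_eigenspace_iff, Matrix.mulVecLin_apply, hA, Matrix.submatrix_mulVec_equiv]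
    have hcomp : (x ∘ e.symm) ∘ e.symm.toEquiv.symm = x :=
      funext fun v => congrArg x (e.symm.toEquiv.apply_symm_apply v)
    rw [hcomp, ← Matrix.mulVecLin_apply, hx.apply_eq_smul]
    rfl
  · ext v
    simpa using congrFun h0 (e v)

theorem hasEigenvalue_adjMat_graphJoin_bot {α β : Type*} [Fintype α] [Fintype β] [Nonempty α]
    {R : SimpleGraph α} {k : ℕ} (hR : IsKRegular R k) {μ : ℝ} (hμ : μ ≠ 0)
    (h : μ ^ 2 = k * μ + Fintype.card α * Fintype.card β) :
    Module.End.HasEigenvalue (adjMat (graphJoin R (⊥ : SimpleGraph β))).mulVecLin μ := by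
  classical
  set x : α ⊕ β → ℝ := Sum.elim (fun _ => μ) (fun _ => Fintype.card α)
  refine Module.End.hasEigenvalue_of_hasEigenvector (x := x) ⟨?_, fun h0 => ?_⟩
  · rw [Module.End.mem_eigenspace_iff, Matrix.mulVecLin_apply]
    ext (a | b) <;>
      simp only [Matrix.mulVec, dotProduct, adjMat, graphJoin, bot_adj, adjMatrix_apply, ite_mul,
        one_mul, zero_mul, Fintype.sum_sum_type, ↓reduceIte, Sum.elim_inl, Sum.elim_inr,
        Finset.sum_const, Finset.card_univ, nsmul_eq_mul, Pi.smul_apply, smul_eq_mul, x]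
    · rw [Finset.sum_ite, Finset.sum_const_zero, add_zero, Finset.sum_const, nsmul_eq_mul,
        ← neighborFinset_eq_filter, card_neighborFinset_eq_degree, ← gdeg_eq_degree, hR a]
      linear_combination -h
    · ring
  · obtain ⟨a⟩ := ‹Nonempty α›
    exact hμ (congrFun h0 (.inl a))

theorem le_specRad_of_mem_SPEX_fan {k m₁ m₂ n : ℕ} (hk : Even k) (hk0 : 0 < k) (hkm : k + 1 ≤ m₁)
    (hn : m₁ + m₂ = n) {G : SimpleGraph (Fin n)} (hG : G ∈ SPEX n (fan (2 * k + 3))) :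
    ((k : ℝ) + √((k : ℝ) ^ 2 + 4 * m₁ * m₂)) / 2 ≤ specRad G := by
  subst hn
  obtain ⟨R, hR, hRpath⟩ :=
    exists_isKRegular_not_isContained_pathGraph (ℓ := 2 * k + 3) hk hkm (by omega)
  set J := graphJoin R (⊥ : SimpleGraph (Fin m₂))
  have hcard : Fintype.card (Fin m₁ ⊕ Fin m₂) = m₁ + m₂ := by simp
  have hfree : ¬ ContainsCopy (fan (2 * k + 3)) (J.overFin hcard) := by
    rw [containsCopy_iff_isContained, ← isContained_congr_right (J.overFinIso hcard),
      ← containsCopy_iff_isContained]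
    exact not_containsCopy_fan_graphJoin_bot (fun a => (hR a).le) (by omega) hRpath
  refine le_trans (le_specRad_of_hasEigenvalue ((J.overFinIso hcard).hasEigenvalue_adjMat ?_))
    (hG.2 _ hfree)
  have : Nonempty (Fin m₁) := ⟨⟨0, by omega⟩⟩
  have hsq := Real.sq_sqrt (show 0 ≤ (k : ℝ) ^ 2 + 4 * m₁ * m₂ by positivity)
  have hk' : (0 : ℝ) < k := by exact_mod_cast hk0
  refine hasEigenvalue_adjMat_graphJoin_bot hR (by positivity) ?_
  simp only [Fintype.card_fin]
  linear_combination hsq / 4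

/-- lower bounds on the spectral radius of graphs in `SPEX(n, H_{2k+3})`
for even `k ≥ 2` and `n ≥ 6k`, according to the parity of `n`. -/
theorem spex_spectral_lower_bound_even_k (k n : ℕ) (hke : Even k) (hk : 2 ≤ k)
    (hn : 6 * k ≤ n) :
    ∀ G ∈ SPEX n (fan (2 * k + 3)),
      (Even n →
        ((k : ℝ) + Real.sqrt ((k : ℝ) ^ 2 + (n : ℝ) ^ 2)) / 2 ≤ specRad G) ∧
      (Odd n →
        ((k : ℝ) + Real.sqrt ((k : ℝ) ^ 2 + (n : ℝ) ^ 2 - 1)) / 2 ≤ specRad G) := by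
  intro G hG
  refine ⟨fun ⟨t, ht⟩ => ?_, fun ⟨t, ht⟩ => ?_⟩
  · convert le_specRad_of_mem_SPEX_fan hke (by omega) (m₁ := t) (m₂ := t) (by omega) ht.symm hG
      using 5
    rw [ht]
    push_cast
    ring
  · convert le_specRad_of_mem_SPEX_fan hke (by omega) (m₁ := t) (m₂ := t + 1) (by omega)
      (by omega) hG using 5
    rw [ht]
    push_cast
    ring
end
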